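/- arXiv:1610.09674 — 4 statements merged into one kernel-verified Lean document; each statement's English description precedes it below -/
import Mathlib

section
/- Let f(x) be a monic polynomial over a field F, and let a, b be positive integers with a ∣ b. If f{a} is reducible over F, then f{b} is reducible over F. -/
/-!
Pick a root `x` of `f` in the algebraic closure. Then `x ^ a` is a root of `f{a}` and
`x ^ b = (x ^ a) ^ (b / a)` is a root of `f{b}`, and both twists have degree `deg f`.
If `f{b}` is irreducible it is the minimal polynomial of `x ^ b ∈ F(x ^ a)`, so
`[F(x ^ a) : F] ≥ deg f = deg f{a}`; as the minimal polynomial of `x ^ a` divides `f{a}`,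
the two coincide and `f{a}` is irreducible.
-/

open Polynomial

/-- For a polynomial `g` over a field `K`, the polynomial whose roots (in `K`)
are the `m`-th powers of the roots of `g`. -/
noncomputable def pTwist {K : Type*} [Field K] (m : ℕ) (g : Polynomial K) : Polynomial K :=
  (g.roots.map (fun x => X - C (x ^ m))).prod

/-- For a monic polynomial `f` over `F` splitting over the algebraic closure as
`∏ (X - xᵢ)`, the polynomial `f{m} = ∏ (X - xᵢ^m)`. -/
noncomputable def twist {F : Type*} [Field F] (m : ℕ) (f : Polynomial F) :
    Polynomial (AlgebraicClosure F) :=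
  pTwist m (f.map (algebraMap F (AlgebraicClosure F)))

section MinpolyDegree

variable {K L : Type*} [Field K] [Field L] [Algebra K L]

open IntermediateField in
theorem minpoly.natDegree_le_of_mem_adjoin_simple {x y : L} (hx : IsIntegral K x)
    (hy : y ∈ K⟮x⟯) : (minpoly K y).natDegree ≤ (minpoly K x).natDegree := by
  have : FiniteDimensional K K⟮x⟯ := adjoin.finiteDimensional hx
  rw [← adjoin.finrank hx, ← IntermediateField.minpoly_eq ⟨y, hy⟩]
  exact minpoly.natDegree_le _

theorem minpoly.natDegree_pow_le {x : L} (hx : IsIntegral K x) (n : ℕ) :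
    (minpoly K (x ^ n)).natDegree ≤ (minpoly K x).natDegree :=
  natDegree_le_of_mem_adjoin_simple hx
    (pow_mem (IntermediateField.mem_adjoin_simple_self K x) n)

theorem Polynomial.Monic.irreducible_of_aeval_eq_zero_of_natDegree_le {p : K[X]} (hp : p.Monic)
    {x : L} (hx : aeval x p = 0) (hdeg : p.natDegree ≤ (minpoly K x).natDegree) :
    Irreducible p := by
  have hint : IsIntegral K x := ⟨p, hp, hx⟩
  rw [eq_of_monic_of_dvd_of_natDegree_le (minpoly.monic hint) hp (minpoly.dvd K x hx) hdeg]
  exact minpoly.irreducible hint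

end MinpolyDegree

section Twist

variable {F K : Type*} [Field F] [Field K]

theorem natDegree_pTwist (m : ℕ) (g : K[X]) : (pTwist m g).natDegree = g.roots.card := by
  rw [pTwist, ← Multiset.card_map (· ^ m), ← natDegree_multiset_prod_X_sub_C_eq_card,
    Multiset.map_map]
  rfl

theorem pTwist_isRoot_pow {g : K[X]} {x : K} (hx : x ∈ g.roots) (m : ℕ) :
    (pTwist m g).IsRoot (x ^ m) := by
  rw [IsRoot, pTwist, eval_multiset_prod]
  exact Multiset.prod_eq_zero (Multiset.mem_map.2 ⟨_, Multiset.mem_map_of_mem _ hx, by simp⟩)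

theorem natDegree_twist (m : ℕ) (f : F[X]) : (twist m f).natDegree = f.natDegree := by
  rw [twist, natDegree_pTwist, IsAlgClosed.card_roots_map_eq_natDegree_from_simpleRing]

theorem natDegree_eq_of_map_eq_twist {m : ℕ} {f p : F[X]}
    (h : p.map (algebraMap F (AlgebraicClosure F)) = twist m f) : p.natDegree = f.natDegree := by
  rw [← natDegree_map (algebraMap F (AlgebraicClosure F)), h, natDegree_twist]

theorem aeval_pow_eq_zero_of_map_eq_twist {m : ℕ} {f p : F[X]}
    (h : p.map (algebraMap F (AlgebraicClosure F)) = twist m f) {x : AlgebraicClosure F}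
    (hx : x ∈ (f.map (algebraMap F (AlgebraicClosure F))).roots) : aeval (x ^ m) p = 0 := by
  rw [aeval_def, ← eval_map, h]
  exact pTwist_isRoot_pow hx m

end Twist

theorem twist_reducible_general {F : Type*} [Field F] (f : Polynomial F) (a b : ℕ) (hab : a ∣ b)
    (fa fb : Polynomial F) (hfa : fa.Monic) (hfb : fb.Monic)
    (hfa' : fa.map (algebraMap F (AlgebraicClosure F)) = twist a f)
    (hfb' : fb.map (algebraMap F (AlgebraicClosure F)) = twist b f)
    (hred : ¬ Irreducible fa) :
    ¬ Irreducible fb := by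
  intro hirr
  obtain ⟨c, rfl⟩ := hab
  obtain ⟨x, hx⟩ : ∃ x, x ∈ (f.map (algebraMap F (AlgebraicClosure F))).roots := by
    rw [← Multiset.card_pos_iff_exists_mem,
      IsAlgClosed.card_roots_map_eq_natDegree_from_simpleRing, ← natDegree_eq_of_map_eq_twist hfb']
    exact hirr.natDegree_pos
  have hxb := aeval_pow_eq_zero_of_map_eq_twist hfb' hx
  rw [pow_mul] at hxb
  refine hred (hfa.irreducible_of_aeval_eq_zero_of_natDegree_le
    (aeval_pow_eq_zero_of_map_eq_twist hfa' hx) ?_)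
  calc fa.natDegree = fb.natDegree := by
        rw [natDegree_eq_of_map_eq_twist hfa', natDegree_eq_of_map_eq_twist hfb']
    _ = (minpoly F ((x ^ a) ^ c)).natDegree := by
        rw [← minpoly.eq_of_irreducible_of_monic hirr hxb hfb]
    _ ≤ (minpoly F (x ^ a)).natDegree :=
        minpoly.natDegree_pow_le (Algebra.IsIntegral.isIntegral _) c

/-- If `a ∣ b` and `f{a}` is reducible over `F`, then `f{b}` is reducible over `F`. -/
theorem twist_reducible {F : Type*} [Field F] (f : Polynomial F) (hf : f.Monic)
    (hdeg : 2 ≤ f.natDegree) (a b : ℕ) (ha : 0 < a) (hb : 0 < b) (hab : a ∣ b)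
    (fa fb : Polynomial F) (hfa : fa.Monic) (hfb : fb.Monic)
    (hfa' : fa.map (algebraMap F (AlgebraicClosure F)) = twist a f)
    (hfb' : fb.map (algebraMap F (AlgebraicClosure F)) = twist b f)
    (hred : ¬ Irreducible fa) :
    ¬ Irreducible fb :=
  twist_reducible_general f a b hab fa fb hfa hfb hfa' hfb' hred
end

section
/- Let n ≥ 1 and ℓ be a prime with ℓ ≥ √(2n). Let α ∈ 𝔽_{ℓ⁴}ˣ have exact order ℓ² + 1 and minimal polynomial f over 𝔽_ℓ. If f{n} is reducible over 𝔽_ℓ then ℓ² + 1 divides 2n; hence f{n} is irreducible over 𝔽_ℓ. -/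
open Polynomial
open IntermediateField in
private lemma pow_p_sq_eq_self {p : ℕ} [Fact p.Prime] {K : Type*} [Field K] [Algebra (ZMod p) K]
    [FiniteDimensional (ZMod p) K] (x : K) (hd : (minpoly (ZMod p) x).natDegree ∣ 2) :
    x ^ p ^ 2 = x := by
  have hint : IsIntegral (ZMod p) x := .of_finite _ _
  set d := (minpoly (ZMod p) x).natDegree with hdd
  have hfr : Module.finrank (ZMod p) (ZMod p)⟮x⟯ = d := IntermediateField.adjoin.finrank hint
  haveI : Finite K := Module.finite_of_finite (ZMod p)
  haveI : Fintype ((ZMod p)⟮x⟯) := Fintype.ofFinite _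
  have hcard : Fintype.card ((ZMod p)⟮x⟯) = p ^ d := by
    rw [Module.card_eq_pow_finrank (K := ZMod p), ZMod.card, hfr]
  have hx : (⟨x, IntermediateField.mem_adjoin_simple_self _ x⟩ : (ZMod p)⟮x⟯) ^ p ^ d
      = ⟨x, IntermediateField.mem_adjoin_simple_self _ x⟩ := by
    rw [← hcard]; exact FiniteField.pow_card _
  have hx' : x ^ p ^ d = x := by
    have := congrArg (Subtype.val) hx
    push_cast at this
    exact this
  obtain ⟨k, hk⟩ := hd
  have key : ∀ m : ℕ, x ^ (p ^ d) ^ m = x := by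
    intro m
    induction m with
    | zero => simp
    | succ m ih => rw [pow_succ, pow_mul, ih, hx']
  calc x ^ p ^ 2 = x ^ (p ^ d) ^ k := by rw [← pow_mul, ← hk]
  _ = x := key k


/-- Let `n ≥ 1` and let `ℓ ≥ √(2n)` be a prime.  Let `α ∈ 𝔽_{ℓ⁴}ˣ` have exact
order `ℓ² + 1` and minimal polynomial `f` over `𝔽_ℓ`.  If `f{n}` is reducible
over `𝔽_ℓ` then `ℓ² + 1 ∣ 2n`; hence `f{n}` is irreducible over `𝔽_ℓ`. -/
theorem twist_n_minpoly_irreducible (n : ℕ) (hn : 1 ≤ n) (ℓ : ℕ) [Fact ℓ.Prime]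
    (hℓ : Real.sqrt (2 * n) ≤ (ℓ : ℝ))
    (α : (GaloisField ℓ 4)ˣ) (hα : orderOf α = ℓ ^ 2 + 1)
    (fn : Polynomial (ZMod ℓ)) (hfn : fn.Monic)
    (hmap : fn.map (algebraMap (ZMod ℓ) (GaloisField ℓ 4)) =
      pTwist n ((minpoly (ZMod ℓ) (α : GaloisField ℓ 4)).map
        (algebraMap (ZMod ℓ) (GaloisField ℓ 4)))) :
    (¬ Irreducible fn → (ℓ ^ 2 + 1) ∣ 2 * n) ∧ Irreducible fn := by
  have hp : ℓ.Prime := Fact.out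
  set K := GaloisField ℓ 4 with hK
  set φ := algebraMap (ZMod ℓ) K with hφ
  have hφinj : Function.Injective φ := φ.injective
  set a : K := (α : K) with ha
  set f := minpoly (ZMod ℓ) a with hf
  have hinta : IsIntegral (ZMod ℓ) a := .of_finite _ _
  have hf0 : f ≠ 0 := minpoly.ne_zero hinta
  have hfr : Module.finrank (ZMod ℓ) K = 4 := GaloisField.finrank ℓ (by norm_num : 4 ≠ 0)
  set x : K := a ^ n with hx
  -- α is a root of f.map
  have hmem : a ∈ (f.map φ).roots := by
    rw [mem_roots']
    exact ⟨(Polynomial.map_ne_zero_iff hφinj).2 hf0,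
      by rw [IsRoot, eval_map, ← aeval_def]; exact minpoly.aeval _ _⟩
  -- x is a root of fn
  have hxroot : Polynomial.aeval x fn = 0 := by
    have h0 : (fn.map φ).eval x = 0 := by
      rw [hmap, pTwist, eval_multiset_prod, Multiset.map_map]
      apply Multiset.prod_eq_zero
      refine Multiset.mem_map.2 ⟨a, hmem, ?_⟩
      simp [hx]
    rwa [eval_map, ← aeval_def] at h0
  -- degree bound on fn
  have hdeg : fn.natDegree ≤ 4 := by
    have h1 : fn.natDegree = (fn.map φ).natDegree := (natDegree_map_eq_of_injective hφinj fn).symm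
    have h2 : (fn.map φ).natDegree = Multiset.card (f.map φ).roots := by
      rw [hmap, pTwist]
      have : ((f.map φ).roots.map (fun x => X - C (x ^ n)))
          = (((f.map φ).roots.map (fun x => x ^ n)).map (fun a => X - C a)) := by
        rw [Multiset.map_map]; rfl
      rw [this, natDegree_multiset_prod_X_sub_C_eq_card, Multiset.card_map]
    have h3 : Multiset.card (f.map φ).roots ≤ (f.map φ).natDegree := card_roots' _
    have h4 : (f.map φ).natDegree = f.natDegree := natDegree_map_eq_of_injective hφinj f
    have h5 : f.natDegree ≤ 4 := hfr ▸ minpoly.natDegree_le a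
    omega
  have hintx : IsIntegral (ZMod ℓ) x := .of_finite _ _
  have hfn0 : fn ≠ 0 := hfn.ne_zero
  -- the main implication
  have himp : ¬ Irreducible fn → (ℓ ^ 2 + 1) ∣ 2 * n := by
    intro hirr
    set g := minpoly (ZMod ℓ) x with hg
    have hgdvd : g ∣ fn := minpoly.dvd _ _ hxroot
    obtain ⟨c, hc⟩ := hgdvd
    have hgirr : Irreducible g := minpoly.irreducible hintx
    have hc0 : c ≠ 0 := fun h => hfn0 (by rw [hc, h, mul_zero])
    have hcu : ¬ IsUnit c := by
      intro hu
      obtain ⟨u, hu'⟩ := hu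
      exact hirr ((Associated.irreducible (⟨u, by rw [hc, hu']⟩ : Associated g fn)) hgirr)
    have hcdeg : 1 ≤ c.natDegree := by
      by_contra h
      push_neg at h
      have h0 : c.natDegree = 0 := by omega
      exact hcu (isUnit_iff_degree_eq_zero.2 (by rw [degree_eq_natDegree hc0, h0]; rfl))
    have hsum : fn.natDegree = g.natDegree + c.natDegree := by
      rw [hc, natDegree_mul (minpoly.ne_zero hintx) hc0]
    have hd4 : g.natDegree ∣ 4 := hfr ▸ minpoly.degree_dvd hintx
    have hd3 : g.natDegree ≤ 3 := by omega
    have hd2 : g.natDegree ∣ 2 := by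
      interval_cases h : g.natDegree <;> revert hd4 <;> norm_num
    -- x^(ℓ^2) = x
    have hpow : x ^ ℓ ^ 2 = x := pow_p_sq_eq_self x hd2
    -- deduce order divisibility in units
    have hcoe : ((α ^ n : Kˣ) : K) = x := by push_cast [hx, ha]; ring
    have hupow : (α ^ n) ^ (ℓ ^ 2 - 1) = 1 := by
      have h2 : (α ^ n) ^ ℓ ^ 2 = α ^ n := by
        apply Units.ext
        push_cast [hcoe]
        exact_mod_cast hpow
      have h3 : (α ^ n) ^ (ℓ ^ 2 - 1) * (α ^ n) = 1 * (α ^ n) := by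
        rw [one_mul, ← pow_succ]
        have : ℓ ^ 2 - 1 + 1 = ℓ ^ 2 := by
          have := hp.two_le; have : 1 ≤ ℓ ^ 2 := Nat.one_le_pow _ _ (by omega)
          omega
        rw [this, h2]
      exact mul_right_cancel h3
    have hord : orderOf (α ^ n) ∣ ℓ ^ 2 - 1 := orderOf_dvd_of_pow_eq_one hupow
    have hordeq : orderOf (α ^ n) = (ℓ ^ 2 + 1) / Nat.gcd (ℓ ^ 2 + 1) n := by
      rw [orderOf_pow' (n := n) α (by omega), hα]
    set m := ℓ ^ 2 + 1 with hm
    set g0 := Nat.gcd m n with hg0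
    have hdvd1 : m / g0 ∣ m - 2 := by
      have : ℓ ^ 2 - 1 = m - 2 := by omega
      rw [← this, ← hordeq]; exact hord
    have hdvd2 : m / g0 ∣ m := Nat.div_dvd_of_dvd (Nat.gcd_dvd_left _ _)
    have hdvd3 : m / g0 ∣ 2 := by
      have := Nat.dvd_sub hdvd2 hdvd1
      have hm2 : 2 ≤ m := by
        have hℓ2 := hp.two_le
        have : 1 ≤ ℓ ^ 2 := Nat.one_le_pow _ _ (by omega)
        omega
      have h2 : m - (m - 2) = 2 := by omega
      rwa [h2] at this
    have hmeq : g0 * (m / g0) = m := Nat.mul_div_cancel' (Nat.gcd_dvd_left _ _)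
    calc m = g0 * (m / g0) := hmeq.symm
    _ ∣ g0 * 2 := mul_dvd_mul_left _ hdvd3
    _ ∣ n * 2 := mul_dvd_mul_right (Nat.gcd_dvd_right _ _) 2
    _ = 2 * n := by ring
  refine ⟨himp, ?_⟩
  by_contra h
  have hdvd := himp h
  have hle : ℓ ^ 2 + 1 ≤ 2 * n := Nat.le_of_dvd (by omega) hdvd
  have hsq : (2 * n : ℝ) ≤ (ℓ : ℝ) ^ 2 := by
    have h1 := Real.sq_sqrt (by positivity : (0:ℝ) ≤ 2 * (n:ℝ))
    have h2 : Real.sqrt (2 * n) ≤ (ℓ : ℝ) := hℓ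
    nlinarith [Real.sqrt_nonneg (2 * (n:ℝ))]
  have hsqn : 2 * n ≤ ℓ ^ 2 := by exact_mod_cast hsq
  omega
end

section
/- Let f be the block diagonal matrix over a commutative ring R with blocks B₁ = [[0, b],[1, a]] and B₂ = [[1, b],[1, 1+a]]. Then the centralizer of f in M₄(R) consists precisely of block diagonal matrices whose blocks are of the forms [[x, yb],[y, x + ya]] and [[u, vb],[v, u + va]] respectively, provided the characteristic polynomials x² - ax - b and (x-1)² - a(x-1) - b of the two blocks are coprime in R[x]. -/
open Polynomial

section aux
variable {R : Type*} [CommRing R]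

lemma intertwine_aux (A B M : Matrix (Fin 2) (Fin 2) R) (h : M * B = A * M)
    (q : R[X]) : M * aeval B q = aeval A q * M := by
  induction q using Polynomial.induction_on with
  | C r => rw [aeval_C, aeval_C]; exact (Algebra.commutes r M).symm
  | add p q hp hq => rw [map_add, map_add, mul_add, add_mul, hp, hq]
  | monomial n r hn =>
      have e : (C r * X ^ (n + 1) : R[X]) = (C r * X ^ n) * X := by ring
      have e1 : aeval B (C r * X ^ n * X) = aeval B (C r * X ^ n) * B := by
        rw [map_mul, aeval_X]
      have e2 : aeval A (C r * X ^ n * X) = aeval A (C r * X ^ n) * A := by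
        rw [map_mul, aeval_X]
      rw [e, e1, e2, ← mul_assoc, hn, mul_assoc, h, ← mul_assoc]

lemma kill_aux (A B M : Matrix (Fin 2) (Fin 2) R) (p q : R[X])
    (hA : aeval A p = 0) (hB : aeval B q = 0) (hcop : IsCoprime p q)
    (h : M * B = A * M) : M = 0 := by
  obtain ⟨u, v, huv⟩ := hcop
  have h2 : M * (aeval B u * aeval B p) = 0 := by
    rw [show aeval B u * aeval B p = aeval B p * aeval B u by
        rw [← map_mul, ← map_mul, mul_comm],
      ← mul_assoc, intertwine_aux A B M h p, hA, zero_mul, zero_mul]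
  calc M = M * aeval B (u * p + v * q) := by rw [huv]; simp
    _ = M * (aeval B u * aeval B p) + M * (aeval B v * aeval B q) := by
        rw [map_add, map_mul, map_mul, mul_add]
    _ = 0 := by rw [h2, hB, mul_zero, mul_zero, zero_add]

end aux

/-- Let `f` be the block diagonal matrix over a commutative ring `R` with
blocks `B₁ = [[0,b],[1,a]]` and `B₂ = [[1,b],[1,1+a]]`.  If the characteristic
polynomials `x² - ax - b` and `(x-1)² - a(x-1) - b` of the two blocks are
coprime in `R[x]`, then the centralizer of `f` in `M₄(R)` consists precisely of
block diagonal matrices with blocks `[[x, yb],[y, x+ya]]` and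
`[[u, vb],[v, u+va]]`. -/
theorem centralizer_block_diagonal (R : Type*) [CommRing R] (a b : R)
    (f : Matrix (Fin 4) (Fin 4) R)
    (hf : f = !![0, b, 0, 0; 1, a, 0, 0; 0, 0, 1, b; 0, 0, 1, 1 + a])
    (hcop : IsCoprime (X ^ 2 - C a * X - C b : Polynomial R)
      ((X - 1) ^ 2 - C a * (X - 1) - C b)) :
    ∀ M : Matrix (Fin 4) (Fin 4) R,
      M * f = f * M ↔
        ∃ x y u v : R,
          M = !![x, y * b, 0, 0; y, x + y * a, 0, 0;
                 0, 0, u, v * b; 0, 0, v, u + v * a] := by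
  subst hf
  intro M
  constructor
  · intro h
    have hp1 : aeval (!![0, b; 1, a] : Matrix (Fin 2) (Fin 2) R)
        (X ^ 2 - C a * X - C b : R[X]) = 0 := by
      simp only [map_sub, map_mul, map_pow, aeval_X, aeval_C]
      ext i j
      fin_cases i <;> fin_cases j <;>
        simp [pow_two, Matrix.mul_apply, Fin.sum_univ_two, Matrix.one_apply,
          Matrix.algebraMap_matrix_apply] <;> ring
    have hp2 : aeval (!![1, b; 1, 1 + a] : Matrix (Fin 2) (Fin 2) R)
        ((X - 1) ^ 2 - C a * (X - 1) - C b : R[X]) = 0 := by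
      simp only [map_sub, map_mul, map_pow, aeval_X, aeval_C, map_one]
      ext i j
      fin_cases i <;> fin_cases j <;>
        simp [pow_two, Matrix.mul_apply, Fin.sum_univ_two, Matrix.one_apply,
          Matrix.algebraMap_matrix_apply] <;> ring
    have he := Matrix.ext_iff.mpr h
    have e00 := he 0 0; have e02 := he 0 2; have e03 := he 0 3
    have e10 := he 1 0; have e12 := he 1 2; have e13 := he 1 3
    have e20 := he 2 0; have e21 := he 2 1; have e22 := he 2 2
    have e30 := he 3 0; have e31 := he 3 1; have e32 := he 3 2
    simp [Matrix.mul_apply, Fin.sum_univ_four, Matrix.vecHead, Matrix.vecTail]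
      at e00 e02 e03 e10 e12 e13 e20 e21 e22 e30 e31 e32
    have hC : (!![M 0 2, M 0 3; M 1 2, M 1 3] : Matrix (Fin 2) (Fin 2) R) = 0 := by
      apply kill_aux !![0, b; 1, a] !![1, b; 1, 1 + a] _ _ _ hp1 hp2 hcop
      ext i j
      fin_cases i <;> fin_cases j <;>
        simp [Matrix.mul_apply, Fin.sum_univ_two]
      · linear_combination e02
      · linear_combination e03
      · linear_combination e12
      · linear_combination e13
    have hD : (!![M 2 0, M 2 1; M 3 0, M 3 1] : Matrix (Fin 2) (Fin 2) R) = 0 := by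
      apply kill_aux !![1, b; 1, 1 + a] !![0, b; 1, a] _ _ _ hp2 hp1 hcop.symm
      ext i j
      fin_cases i <;> fin_cases j <;>
        simp [Matrix.mul_apply, Fin.sum_univ_two]
      · linear_combination e20
      · linear_combination e21
      · linear_combination e30
      · linear_combination e31
    have z02 : M 0 2 = 0 := by simpa using Matrix.ext_iff.mpr hC 0 0
    have z03 : M 0 3 = 0 := by simpa using Matrix.ext_iff.mpr hC 0 1
    have z12 : M 1 2 = 0 := by simpa using Matrix.ext_iff.mpr hC 1 0
    have z13 : M 1 3 = 0 := by simpa using Matrix.ext_iff.mpr hC 1 1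
    have z20 : M 2 0 = 0 := by simpa using Matrix.ext_iff.mpr hD 0 0
    have z21 : M 2 1 = 0 := by simpa using Matrix.ext_iff.mpr hD 0 1
    have z30 : M 3 0 = 0 := by simpa using Matrix.ext_iff.mpr hD 1 0
    have z31 : M 3 1 = 0 := by simpa using Matrix.ext_iff.mpr hD 1 1
    refine ⟨M 0 0, M 1 0, M 2 2, M 3 2, ?_⟩
    ext i j
    fin_cases i <;> fin_cases j
    · show M 0 0 = M 0 0; rfl
    · show M 0 1 = M 1 0 * b; linear_combination e00
    · show M 0 2 = (0 : R); exact z02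
    · show M 0 3 = (0 : R); exact z03
    · show M 1 0 = M 1 0; rfl
    · show M 1 1 = M 0 0 + M 1 0 * a; linear_combination e10
    · show M 1 2 = (0 : R); exact z12
    · show M 1 3 = (0 : R); exact z13
    · show M 2 0 = (0 : R); exact z20
    · show M 2 1 = (0 : R); exact z21
    · show M 2 2 = M 2 2; rfl
    · show M 2 3 = M 3 2 * b; linear_combination e22
    · show M 3 0 = (0 : R); exact z30
    · show M 3 1 = (0 : R); exact z31
    · show M 3 2 = M 3 2; rfl
    · show M 3 3 = M 2 2 + M 3 2 * a; linear_combination e32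
  · rintro ⟨x, y, u, v, rfl⟩
    ext i j
    fin_cases i <;> fin_cases j <;>
      simp [Matrix.mul_apply, Fin.sum_univ_four, Matrix.vecHead, Matrix.vecTail] <;> ring
end

section
/- The curve C: y² = 4x⁶ + 12x⁵ + 9x⁴ + 30x³ + 45x² + 56 admits a degree-7 morphism to the elliptic curve E: z² = w³ - 51w + 142, given explicitly by w = (7 - 546x + 504x² - 714x³ + 252x⁴ - 84x⁵ - 49x⁶ + 42x⁷)/(49 - 98x + 168x² - 126x³ + 84x⁴ - 7x⁶ + 14x⁷) and z = (4(8 + 3x² + 2x³)(-19 + 18x - 12x² + 13x³ + 9x⁴ + 12x⁵ + 4x⁶ + 9x⁷ + 2x⁹) / ((1 - x + x²)³(7 + 3x² + 2x³)(56 + 45x² + 30x³ + 9x⁴ + 12x⁵ + 4x⁶)))·y. In particular, substituting these expressions into z² - w³ + 51w - 142 and using y² = 4x⁶ + 12x⁵ + 9x⁴ + 30x³ + 45x² + 56 yields the zero rational function. -/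
open Polynomial

/-- Numerator of the `w`-coordinate of the degree-7 map `C → E`. -/
noncomputable def wNum : Polynomial ℚ :=
  7 - 546 * X + 504 * X ^ 2 - 714 * X ^ 3 + 252 * X ^ 4 - 84 * X ^ 5
    - 49 * X ^ 6 + 42 * X ^ 7

/-- Denominator of the `w`-coordinate. -/
noncomputable def wDen : Polynomial ℚ :=
  49 - 98 * X + 168 * X ^ 2 - 126 * X ^ 3 + 84 * X ^ 4 - 7 * X ^ 6 + 14 * X ^ 7

/-- Numerator of the rational function multiplying `y` in the `z`-coordinate. -/
noncomputable def zNum : Polynomial ℚ :=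
  4 * (8 + 3 * X ^ 2 + 2 * X ^ 3) *
    (-19 + 18 * X - 12 * X ^ 2 + 13 * X ^ 3 + 9 * X ^ 4 + 12 * X ^ 5
      + 4 * X ^ 6 + 9 * X ^ 7 + 2 * X ^ 9)

/-- Denominator of the rational function multiplying `y` in the `z`-coordinate. -/
noncomputable def zDen : Polynomial ℚ :=
  (1 - X + X ^ 2) ^ 3 * (7 + 3 * X ^ 2 + 2 * X ^ 3) *
    (56 + 45 * X ^ 2 + 30 * X ^ 3 + 9 * X ^ 4 + 12 * X ^ 5 + 4 * X ^ 6)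

/-- The right-hand side of the hyperelliptic model `y² = h(x)` of the curve `C`. -/
noncomputable def hC : Polynomial ℚ :=
  4 * X ^ 6 + 12 * X ^ 5 + 9 * X ^ 4 + 30 * X ^ 3 + 45 * X ^ 2 + 56

lemma wNum_natDegree : wNum.natDegree = 7 := by
  unfold wNum
  compute_degree!

lemma wDen_natDegree : wDen.natDegree = 7 := by
  unfold wDen
  compute_degree!

lemma wDen_ne_zero : wDen ≠ 0 :=
  ne_zero_of_natDegree_gt (n := 0) (by rw [wDen_natDegree]; norm_num)

lemma zDen_ne_zero : zDen ≠ 0 := fun h => by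
  simpa [zDen] using congrArg (eval 0) h

lemma zNum_sq_mul_hC_mul_wDen_pow_three :
    zNum ^ 2 * hC * wDen ^ 3 =
      (wNum ^ 3 - 51 * wNum * wDen ^ 2 + 142 * wDen ^ 3) * zDen ^ 2 := by
  unfold zNum hC wDen wNum zDen
  ring

/-- The curve `C : y² = 4x⁶ + 12x⁵ + 9x⁴ + 30x³ + 45x² + 56` admits a degree-7
morphism to the elliptic curve `E : z² = w³ - 51w + 142`: substituting the
explicit expressions for `w` and `z = (zNum/zDen)·y` into `z² - w³ + 51w - 142`
and using `y² = h(x)` yields zero, i.e. `(zNum/zDen)² · h = w³ - 51w + 142`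
holds in `ℚ(x)`; the map `w` has degree `7`. -/
theorem degree_seven_covering :
    wNum.natDegree = 7 ∧ wDen.natDegree = 7 ∧
    (letI A := algebraMap (Polynomial ℚ) (RatFunc ℚ)
     (A zNum / A zDen) ^ 2 * A hC =
        (A wNum / A wDen) ^ 3 - 51 * (A wNum / A wDen) + 142) := by
  refine ⟨wNum_natDegree, wDen_natDegree, ?_⟩
  have hw := RatFunc.algebraMap_ne_zero wDen_ne_zero
  have hz := RatFunc.algebraMap_ne_zero zDen_ne_zero
  have key := congrArg (algebraMap ℚ[X] (RatFunc ℚ)) zNum_sq_mul_hC_mul_wDen_pow_three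
  simp only [map_mul, map_sub, map_add, map_pow, map_ofNat] at key
  field_simp
  linear_combination key
end
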